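/- If G is a primitive sublattice of an even unimodular lattice Γ with orthogonal complement G⊥, then the natural map D(G) → D(G⊥) induced by projection in Γ ⊗ ℚ is a group isomorphism reversing the discriminant quadratic forms: (D(G), q̄) ≅ (D(G⊥), −q̄). -/

import Mathlib

/-- The orthogonal complement of the sublattice `G` inside the lattice `Γ`. -/
def perpIn {V : Type*} [AddCommGroup V] [Module ℚ V]
    (B : V →ₗ[ℚ] V →ₗ[ℚ] ℚ) (Γ G : Submodule ℤ V) : Set V :=
  {y | y ∈ Γ ∧ ∀ x ∈ G, B y x = 0}

/-- The dual lattice of a set `S` inside the `ℚ`-span of `S`. -/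
def dualOfSet {V : Type*} [AddCommGroup V] [Module ℚ V]
    (B : V →ₗ[ℚ] V →ₗ[ℚ] ℚ) (S : Set V) : Set V :=
  {v | v ∈ Submodule.span ℚ S ∧ ∀ x ∈ S, ∃ n : ℤ, B v x = (n : ℚ)}

/-- The dual lattice of `L` inside the `ℚ`-span of `L`, as a set. -/
def dualSet {V : Type*} [AddCommGroup V] [Module ℚ V]
    (B : V →ₗ[ℚ] V →ₗ[ℚ] ℚ) (L : Submodule ℤ V) : Set V :=
  dualOfSet B (L : Set V)

/-!
Primitivity makes `G` a direct summand of `Γ` (a free `ℤ`-module of finite rank, because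
`Γ` lies in the dual of a `ℚ`-basis contained in `Γ`). Hence every integral functional on `G`
extends to `Γ`, and unimodularity represents the extension by some `u ∈ Γ`. For `v ∈ G∨` the
vector `w := u - v` is orthogonal to `G`, so it lies in `span G⊥ = (span G)ᗮ` and pairs
integrally with `G⊥`: this is the partner of `v`, with `v + w = u ∈ Γ`. As `B` is nondegenerate,
`(span G)ᗮᗮ = span G`, so the roles of `G` and `G⊥` can be exchanged, which gives surjectivity.
Since `Γ ∩ span L = L` for primitive `L`, a difference `v - v'` lies in `G` exactly when the
matching `w - w'` lies in `G⊥`. Finally `v ⊥ w`, so `B(w,w) + B(v,v) = B(v+w, v+w) ∈ 2ℤ`.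
-/

open Submodule LinearMap.BilinForm

theorem Submodule.exists_leftInverse_subtype_of_isTorsionFree_quotient {R M : Type*} [CommRing R]
    [IsDomain R] [IsPrincipalIdealRing R] [AddCommGroup M] [Module R M] [Module.Finite R M]
    (N : Submodule R M) [Module.IsTorsionFree R (M ⧸ N)] :
    ∃ ρ : M →ₗ[R] N, ρ ∘ₗ N.subtype = LinearMap.id := by
  obtain ⟨σ, hσ⟩ := N.mkQ.exists_rightInverse_of_surjective N.range_mkQ
  have hmem : ∀ x, (LinearMap.id - σ ∘ₗ N.mkQ : M →ₗ[R] M) x ∈ N := fun x => by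
    rw [← Quotient.mk_eq_zero, ← mkQ_apply]
    simpa [sub_eq_zero] using (LinearMap.congr_fun hσ (N.mkQ x)).symm
  refine ⟨(LinearMap.id - σ ∘ₗ N.mkQ).codRestrict N hmem, LinearMap.ext fun x => Subtype.ext ?_⟩
  simp [(Quotient.mk_eq_zero N).2 x.2]

theorem LinearMap.BilinForm.mem_orthogonal_span_iff {R M : Type*} [CommSemiring R]
    [AddCommMonoid M] [Module R M] (B : LinearMap.BilinForm R M) {S : Set M} {x : M} :
    x ∈ B.orthogonal (span R S) ↔ ∀ s ∈ S, B s x = 0 := by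
  refine ⟨fun h s hs => h s (subset_span hs), fun h n hn => ?_⟩
  have : span R S ≤ LinearMap.ker (B.flip x) := span_le.2 fun s hs => by simpa using h s hs
  simpa using this hn

def IsPrimitiveIn {V : Type*} [AddCommGroup V] (Γ G : Submodule ℤ V) : Prop :=
  ∀ x ∈ Γ, ∀ n : ℤ, n ≠ 0 → n • x ∈ G → x ∈ G

theorem IsPrimitiveIn.isTorsionFree_quotient {V : Type*} [AddCommGroup V]
    {Γ G : Submodule ℤ V} (h : IsPrimitiveIn Γ G) :
    Module.IsTorsionFree ℤ (Γ ⧸ G.comap Γ.subtype) := by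
  refine Module.isTorsionFree_iff_smul_eq_zero.2 fun n x hnx => or_iff_not_imp_left.2 fun hn => ?_
  induction x using Quotient.induction_on with | _ x
  rw [← Quotient.mk_smul, Quotient.mk_eq_zero] at hnx
  rw [Quotient.mk_eq_zero]
  exact h x x.2 n hn hnx

section

variable {V : Type*} [AddCommGroup V] [Module ℚ V]

theorem exists_ne_zero_zsmul_mem_of_mem_span (L : Submodule ℤ V) {x : V}
    (hx : x ∈ span ℚ (L : Set V)) : ∃ m : ℤ, m ≠ 0 ∧ m • x ∈ L := by
  induction hx using span_induction with
  | mem y hy => exact ⟨1, one_ne_zero, by simpa using hy⟩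
  | zero => exact ⟨1, one_ne_zero, by simp⟩
  | add y z _ _ hy hz =>
    obtain ⟨m, hm, hmy⟩ := hy
    obtain ⟨k, hk, hkz⟩ := hz
    refine ⟨m * k, mul_ne_zero hm hk, ?_⟩
    convert L.add_mem (L.smul_mem k hmy) (L.smul_mem m hkz) using 1
    module
  | smul q y _ hy =>
    obtain ⟨m, hm, hmy⟩ := hy
    refine ⟨q.den * m, mul_ne_zero (mod_cast q.den_nz) hm, ?_⟩
    convert L.smul_mem q.num hmy using 1
    simp only [← Int.cast_smul_eq_zsmul ℚ, smul_smul]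
    congr 1
    push_cast
    linear_combination (m : ℚ) * Rat.mul_den_eq_num q

theorem exists_linearMap_eq_on_of_span_eq_top {Γ : Submodule ℤ V} [Module.Free ℤ Γ]
    (hspan : span ℚ (Γ : Set V) = ⊤) (f : Γ →ₗ[ℤ] ℚ) :
    ∃ F : V →ₗ[ℚ] ℚ, ∀ x : Γ, F x = f x := by
  let b := Module.Free.chooseBasis ℤ Γ
  have hind : LinearIndependent ℚ (Γ.subtype ∘ b) :=
    (LinearIndependent.iff_fractionRing ℤ ℚ).1 (b.linearIndependent.map' _ Γ.ker_subtype)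
  have hsp : ⊤ ≤ span ℚ (Set.range (Γ.subtype ∘ b)) := by
    rw [← span_span_of_tower ℤ, Set.range_comp, ← map_span, b.span_eq, map_subtype_top, hspan]
  let bV := Module.Basis.mk hind hsp
  refine ⟨bV.constr ℚ (f ∘ b), fun x => ?_⟩
  have := b.ext (f₁ := (bV.constr ℚ (f ∘ b)).restrictScalars ℤ ∘ₗ Γ.subtype) (f₂ := f) fun i => by
    simpa [bV] using bV.constr_basis ℚ (f ∘ b) i
  exact LinearMap.congr_fun this x

variable {B : LinearMap.BilinForm ℚ V} {Γ : Submodule ℤ V}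

theorem Module.Finite.of_span_eq_top_of_integral [FiniteDimensional ℚ V]
    (hB : B.Nondegenerate) (hspan : span ℚ (Γ : Set V) = ⊤)
    (hint : ∀ x ∈ Γ, ∀ y ∈ Γ, ∃ n : ℤ, B x y = n) : Module.Finite ℤ Γ := by
  classical
  obtain ⟨s, hsΓ, hs, hsind⟩ := exists_linearIndependent ℚ (Γ : Set V)
  have : Finite s := hsind.finite
  let b : Module.Basis s ℚ V :=
    .mk (v := Subtype.val) (by simpa using hsind) (by rw [Subtype.range_coe, hs, hspan])
  have hle : Γ ≤ B.dualSubmodule (span ℤ (Set.range b)) := by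
    intro x hx y hy
    have hyΓ : y ∈ Γ := span_le.2 (by simpa [b] using hsΓ) hy
    obtain ⟨n, hn⟩ := hint x hx y hyΓ
    exact mem_one.2 ⟨n, by simp [hn]⟩
  rw [dualSubmodule_span_of_basis B hB b] at hle
  exact Module.Finite.iff_fg.2 ((fg_span (Set.finite_range _)).of_le hle)

theorem exists_mem_apply_eq_of_dualSet_eq [FiniteDimensional ℚ V] [Module.Free ℤ Γ]
    (hB : B.Nondegenerate) (hspan : span ℚ (Γ : Set V) = ⊤) (hunimod : dualSet B Γ = Γ)
    (f : Γ →ₗ[ℤ] ℚ) (hf : ∀ x, ∃ n : ℤ, f x = n) : ∃ u ∈ Γ, ∀ x : Γ, B u x = f x := by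
  obtain ⟨F, hF⟩ := exists_linearMap_eq_on_of_span_eq_top hspan f
  have hu : ∀ w, B ((B.toDual hB).symm F) w = F w := fun w => apply_toDual_symm_apply F w
  refine ⟨(B.toDual hB).symm F, ?_, fun x => (hu x).trans (hF x)⟩
  rw [← SetLike.mem_coe, ← hunimod]
  exact ⟨hspan ▸ mem_top, fun x hx => by simpa [hu, hF ⟨x, hx⟩] using hf ⟨x, hx⟩⟩

theorem IsPrimitiveIn.exists_mem_apply_eq [FiniteDimensional ℚ V] (hB : B.Nondegenerate)
    (hspan : span ℚ (Γ : Set V) = ⊤) (hint : ∀ x ∈ Γ, ∀ y ∈ Γ, ∃ n : ℤ, B x y = n)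
    (hunimod : dualSet B Γ = Γ) {G : Submodule ℤ V} (hGΓ : G ≤ Γ) (hprim : IsPrimitiveIn Γ G)
    {v : V} (hv : ∀ g ∈ G, ∃ n : ℤ, B v g = n) : ∃ u ∈ Γ, ∀ g ∈ G, B u g = B v g := by
  have := Module.Finite.of_span_eq_top_of_integral hB hspan hint
  have := hprim.isTorsionFree_quotient
  have : IsAddTorsionFree V := .of_module_rat V
  obtain ⟨ρ, hρ⟩ := (G.comap Γ.subtype).exists_leftInverse_subtype_of_isTorsionFree_quotient
  let f : Γ →ₗ[ℤ] ℚ :=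
    (B v).restrictScalars ℤ ∘ₗ Γ.subtype ∘ₗ (G.comap Γ.subtype).subtype ∘ₗ ρ
  obtain ⟨u, huΓ, hu⟩ :=
    exists_mem_apply_eq_of_dualSet_eq hB hspan hunimod f fun x => hv _ (ρ x).2
  refine ⟨u, huΓ, fun g hg => ?_⟩
  have hρg : ρ ⟨g, hGΓ hg⟩ = ⟨⟨g, hGΓ hg⟩, hg⟩ := LinearMap.congr_fun hρ ⟨⟨g, hGΓ hg⟩, hg⟩
  simp [hu ⟨g, hGΓ hg⟩, f, hρg]

theorem exists_int_eq_of_even (hsym : ∀ x y, B x y = B y x)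
    (heven : ∀ x ∈ Γ, ∃ n : ℤ, B x x = 2 * n) : ∀ x ∈ Γ, ∀ y ∈ Γ, ∃ n : ℤ, B x y = n := by
  intro x hx y hy
  obtain ⟨a, ha⟩ := heven (x + y) (Γ.add_mem hx hy)
  obtain ⟨b, hb⟩ := heven x hx
  obtain ⟨c, hc⟩ := heven y hy
  refine ⟨a - b - c, ?_⟩
  simp only [map_add, LinearMap.add_apply, hsym y x] at ha
  push_cast
  linarith

theorem apply_add_self_of_apply_eq_zero {v w : V} (hvw : B v w = 0) (hwv : B w v = 0) :
    B (v + w) (v + w) = B w w + B v v := by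
  simp only [map_add, LinearMap.add_apply, hvw, hwv]
  ring

theorem IsPrimitiveIn.mem_of_mem_span {G : Submodule ℤ V} (hprim : IsPrimitiveIn Γ G) {x : V}
    (hxΓ : x ∈ Γ) (hx : x ∈ span ℚ (G : Set V)) : x ∈ G := by
  obtain ⟨m, hm, hmx⟩ := exists_ne_zero_zsmul_mem_of_mem_span G hx
  exact hprim x hxΓ m hm hmx

variable (B Γ) in
def perpInSubmodule (G : Submodule ℤ V) : Submodule ℤ V where
  carrier := perpIn B Γ G
  add_mem' hx hy := ⟨Γ.add_mem hx.1 hy.1, fun g hg => by simp [hx.2 g hg, hy.2 g hg]⟩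
  zero_mem' := ⟨Γ.zero_mem, fun g _ => by simp⟩
  smul_mem' n x hx := ⟨Γ.smul_mem n hx.1, fun g hg => by simp [hx.2 g hg]⟩

theorem mem_perpInSubmodule {G : Submodule ℤ V} {x : V} :
    x ∈ perpInSubmodule B Γ G ↔ x ∈ perpIn B Γ G :=
  Iff.rfl

theorem dualSet_perpInSubmodule (G : Submodule ℤ V) :
    dualSet B (perpInSubmodule B Γ G) = dualOfSet B (perpIn B Γ G) :=
  rfl

variable (B Γ) in
theorem isPrimitiveIn_perpInSubmodule (G : Submodule ℤ V) :
    IsPrimitiveIn Γ (perpInSubmodule B Γ G) := by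
  refine fun x hx n hn hnx => ⟨hx, fun g hg => ?_⟩
  have h := hnx.2 g hg
  rwa [map_zsmul, LinearMap.smul_apply, smul_eq_zero, or_iff_right hn] at h

theorem span_perpInSubmodule_eq_orthogonal (hsym : ∀ x y, B x y = B y x)
    (hspan : span ℚ (Γ : Set V) = ⊤) (G : Submodule ℤ V) :
    span ℚ (perpInSubmodule B Γ G : Set V) = B.orthogonal (span ℚ (G : Set V)) := by
  refine le_antisymm (span_le.2 fun y hy => ?_) fun x hx => ?_
  · exact B.mem_orthogonal_span_iff.2 fun g hg => by rw [hsym]; exact hy.2 g hg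
  · obtain ⟨m, hm, hmx⟩ := exists_ne_zero_zsmul_mem_of_mem_span Γ (hspan ▸ mem_top : x ∈ _)
    have hmxP : m • x ∈ perpInSubmodule B Γ G := ⟨hmx, fun g hg => by
      simp [hsym x, B.mem_orthogonal_span_iff.1 hx g hg]⟩
    have : x = (m : ℚ)⁻¹ • m • x := by
      rw [← Int.cast_smul_eq_zsmul ℚ, inv_smul_smul₀ (mod_cast hm)]
    rw [this]
    exact smul_mem _ _ (subset_span hmxP)

theorem exists_add_mem_of_mem_dualSet [FiniteDimensional ℚ V] (hsym : ∀ x y, B x y = B y x)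
    (hB : B.Nondegenerate) (hspan : span ℚ (Γ : Set V) = ⊤)
    (hint : ∀ x ∈ Γ, ∀ y ∈ Γ, ∃ n : ℤ, B x y = n) (hunimod : dualSet B Γ = Γ)
    {L M : Submodule ℤ V} (hLΓ : L ≤ Γ) (hL : IsPrimitiveIn Γ L) (hMΓ : M ≤ Γ)
    (hLM : span ℚ (M : Set V) = B.orthogonal (span ℚ (L : Set V))) :
    ∀ v ∈ dualSet B L, ∃ w ∈ dualSet B M, v + w ∈ Γ := by
  rintro v ⟨hvL, hv⟩
  obtain ⟨u, huΓ, hu⟩ := hL.exists_mem_apply_eq hB hspan hint hunimod hLΓ hv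
  have huv : u - v ∈ span ℚ (M : Set V) := hLM ▸ B.mem_orthogonal_span_iff.2 fun g hg => by
    rw [hsym, map_sub, LinearMap.sub_apply, hu g hg, sub_self]
  refine ⟨u - v, ⟨huv, fun y hy => ?_⟩, by rwa [add_sub_cancel]⟩
  obtain ⟨n, hn⟩ := hint u huΓ y (hMΓ hy)
  have hvy : B v y = 0 := (hLM ▸ subset_span hy : y ∈ B.orthogonal _) v hvL
  exact ⟨n, by rw [map_sub, LinearMap.sub_apply, hn, hvy, sub_zero]⟩

theorem mem_iff_mem_of_add_mem {L M : Submodule ℤ V} (hLΓ : L ≤ Γ) (hL : IsPrimitiveIn Γ L)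
    (hMΓ : M ≤ Γ) (hM : IsPrimitiveIn Γ M) {a b : V} (hab : a + b ∈ Γ)
    (ha : a ∈ span ℚ (L : Set V)) (hb : b ∈ span ℚ (M : Set V)) : a ∈ L ↔ b ∈ M := by
  refine ⟨fun haL => hM.mem_of_mem_span ?_ hb, fun hbM => hL.mem_of_mem_span ?_ ha⟩
  · simpa using Γ.sub_mem hab (hLΓ haL)
  · simpa using Γ.sub_mem hab (hMΓ hbM)

end

theorem stmt_15_general (V : Type*) [AddCommGroup V] [Module ℚ V] [FiniteDimensional ℚ V]
    (B : V →ₗ[ℚ] V →ₗ[ℚ] ℚ) (hsym : ∀ x y, B x y = B y x)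
    (hnd : ∀ v : V, (∀ w, B v w = 0) → v = 0)
    (Γ : Submodule ℤ V) (hspan : Submodule.span ℚ (Γ : Set V) = ⊤)
    (heven : ∀ x ∈ Γ, ∃ n : ℤ, B x x = 2 * (n : ℚ))
    (hunimod : dualSet B Γ = (Γ : Set V))
    (G : Submodule ℤ V) (hGΓ : G ≤ Γ)
    (hprim : ∀ x ∈ Γ, ∀ n : ℤ, n ≠ 0 → n • x ∈ G → x ∈ G) :
    -- the correspondence is defined on all of D(G)
    (∀ v ∈ dualSet B G, ∃ w ∈ dualOfSet B (perpIn B Γ G), v + w ∈ Γ) ∧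
    -- surjectivity onto D(G⊥)
    (∀ w ∈ dualOfSet B (perpIn B Γ G), ∃ v ∈ dualSet B G, v + w ∈ Γ) ∧
    -- well-definedness and injectivity on discriminant classes
    (∀ v ∈ dualSet B G, ∀ v' ∈ dualSet B G,
      ∀ w ∈ dualOfSet B (perpIn B Γ G), ∀ w' ∈ dualOfSet B (perpIn B Γ G),
      v + w ∈ Γ → v' + w' ∈ Γ →
        ((v - v' ∈ G) ↔ (∃ y ∈ perpIn B Γ G, w - w' = y))) ∧
    -- the isomorphism reverses the discriminant quadratic forms
    (∀ v ∈ dualSet B G, ∀ w ∈ dualOfSet B (perpIn B Γ G), v + w ∈ Γ →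
      ∃ n : ℤ, B w w + B v v = 2 * (n : ℚ)) := by
  have hrefl : B.IsRefl := fun x y h => (hsym y x).trans h
  have hB : B.Nondegenerate := hrefl.nondegenerate_iff_separatingLeft.2 hnd
  have hint := exists_int_eq_of_even hsym heven
  have hPΓ : perpInSubmodule B Γ G ≤ Γ := fun _ hy => hy.1
  have hPprim := isPrimitiveIn_perpInSubmodule B Γ G
  have hP := span_perpInSubmodule_eq_orthogonal hsym hspan G
  have hG : span ℚ (G : Set V) =
      LinearMap.BilinForm.orthogonal B (span ℚ (perpInSubmodule B Γ G : Set V)) := by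
    rw [hP, orthogonal_orthogonal hB hrefl]
  have hGP := exists_add_mem_of_mem_dualSet hsym hB hspan hint hunimod hGΓ hprim hPΓ hP
  have hPG := exists_add_mem_of_mem_dualSet hsym hB hspan hint hunimod hPΓ hPprim hGΓ hG
  rw [dualSet_perpInSubmodule] at hGP hPG
  refine ⟨hGP, fun w hw => ?_, ?_, ?_⟩
  · obtain ⟨v, hv, hwv⟩ := hPG w hw
    exact ⟨v, hv, by rwa [add_comm]⟩
  · intro v hv v' hv' w hw w' hw' hvw hv'w'
    rw [exists_eq_right', ← mem_perpInSubmodule]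
    refine mem_iff_mem_of_add_mem hGΓ hprim hPΓ hPprim ?_ (sub_mem hv.1 hv'.1) (sub_mem hw.1 hw'.1)
    convert Γ.sub_mem hvw hv'w' using 1
    abel
  · intro v hv w hw hvw
    have hvw₀ : B v w = 0 := (hP ▸ hw.1 : w ∈ LinearMap.BilinForm.orthogonal B _) v hv.1
    rw [← apply_add_self_of_apply_eq_zero hvw₀ (hsym w v ▸ hvw₀)]
    exact heven _ hvw

/-- Nikulin: if `G` is a primitive nondegenerate sublattice of an even unimodular
lattice `Γ` with orthogonal complement `G⊥`, then the natural correspondence induced by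
`Γ` (pairing `v ∈ G∨` with `w ∈ (G⊥)∨` whenever `v + w ∈ Γ`) is a group isomorphism
`D(G) ≅ D(G⊥)` reversing the discriminant quadratic forms. -/
theorem stmt_15 (V : Type*) [AddCommGroup V] [Module ℚ V] [FiniteDimensional ℚ V]
    (B : V →ₗ[ℚ] V →ₗ[ℚ] ℚ) (hsym : ∀ x y, B x y = B y x)
    (hnd : ∀ v : V, (∀ w, B v w = 0) → v = 0)
    (Γ : Submodule ℤ V) (hspan : Submodule.span ℚ (Γ : Set V) = ⊤)
    (heven : ∀ x ∈ Γ, ∃ n : ℤ, B x x = 2 * (n : ℚ))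
    (hunimod : dualSet B Γ = (Γ : Set V))
    (G : Submodule ℤ V) (hGΓ : G ≤ Γ)
    (hprim : ∀ x ∈ Γ, ∀ n : ℤ, n ≠ 0 → n • x ∈ G → x ∈ G)
    (hndG : ∀ v ∈ Submodule.span ℚ (G : Set V),
      (∀ w ∈ Submodule.span ℚ (G : Set V), B v w = 0) → v = 0) :
    -- the correspondence is defined on all of D(G)
    (∀ v ∈ dualSet B G, ∃ w ∈ dualOfSet B (perpIn B Γ G), v + w ∈ Γ) ∧
    -- surjectivity onto D(G⊥)
    (∀ w ∈ dualOfSet B (perpIn B Γ G), ∃ v ∈ dualSet B G, v + w ∈ Γ) ∧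
    -- well-definedness and injectivity on discriminant classes
    (∀ v ∈ dualSet B G, ∀ v' ∈ dualSet B G,
      ∀ w ∈ dualOfSet B (perpIn B Γ G), ∀ w' ∈ dualOfSet B (perpIn B Γ G),
      v + w ∈ Γ → v' + w' ∈ Γ →
        ((v - v' ∈ G) ↔ (∃ y ∈ perpIn B Γ G, w - w' = y))) ∧
    -- the isomorphism reverses the discriminant quadratic forms
    (∀ v ∈ dualSet B G, ∀ w ∈ dualOfSet B (perpIn B Γ G), v + w ∈ Γ →
      ∃ n : ℤ, B w w + B v v = 2 * (n : ℚ)) :=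
  stmt_15_general V B hsym hnd Γ hspan heven hunimod G hGΓ hprim
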